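/- arXiv:math/0303042 — 6 statements merged into one kernel-verified Lean document; each statement's English description precedes it below -/
import Mathlib

section
/- Let X be a compact metric space and let f, (f_n), (p_n) be continuous maps from X to X. If the sequence f ∘ p_n converges uniformly to the identity and the sequence p_n ∘ f_n converges uniformly to the identity, then f_n converges uniformly to f. -/
/-- Let `X` be a compact metric space and `f`, `(fₙ)`, `(pₙ)` continuous
self-maps of `X`. If `f ∘ pₙ` converges uniformly to the identity and `pₙ ∘ fₙ`
converges uniformly to the identity, then `fₙ` converges uniformly to `f`. -/
theorem stmt0 {X : Type*} [MetricSpace X] [CompactSpace X]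
    (f : C(X, X)) (fseq pseq : ℕ → C(X, X))
    (h1 : TendstoUniformly (fun n x => f (pseq n x)) (fun x => x) Filter.atTop)
    (h2 : TendstoUniformly (fun n x => pseq n (fseq n x)) (fun x => x) Filter.atTop) :
    TendstoUniformly (fun n x => fseq n x) (fun x => f x) Filter.atTop := by
  rw [Metric.tendstoUniformly_iff] at h1 h2 ⊢
  intro ε hε
  have hf : UniformContinuous f := CompactSpace.uniformContinuous_of_continuous f.continuous
  rw [Metric.uniformContinuous_iff] at hf
  obtain ⟨δ, hδ, hδ'⟩ := hf (ε / 2) (by linarith)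
  filter_upwards [h1 (ε / 2) (by linarith), h2 δ hδ] with n hn1 hn2 x
  calc dist (f x) (fseq n x)
      ≤ dist (f x) (f (pseq n (fseq n x))) + dist (f (pseq n (fseq n x))) (fseq n x) :=
        dist_triangle _ _ _
    _ < ε / 2 + ε / 2 := by
        refine add_lt_add (hδ' ?_) ?_
        · exact hn2 x
        · have := hn1 (fseq n x)
          rwa [dist_comm] at this
    _ = ε := by linarith
end

section
/- Let (X,d) be a compact metric space and ε > 0. The set of ε-maps in C(X,X), i.e., continuous maps f : X → X such that diam(f⁻¹({y})) < ε for all y ∈ X, is open in C(X,X) with the uniform topology. -/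
/-- For a compact metric space `X` and `ε > 0`, the set of `ε`-maps in
`C(X,X)` (continuous self-maps all of whose fibers have diameter `< ε`) is open in
`C(X,X)` with the uniform topology. -/
theorem stmt6 {X : Type*} [MetricSpace X] [CompactSpace X] (ε : ℝ) (hε : 0 < ε) :
    IsOpen {f : C(X, X) | ∀ y : X, Metric.diam (f ⁻¹' {y}) < ε} := by
  rcases isEmpty_or_nonempty X with hX | hX
  · convert isOpen_univ
    ext f
    simp only [Set.mem_setOf_eq, Set.mem_univ, iff_true]
    intro y
    exact (IsEmpty.false y).elim
  · rw [Metric.isOpen_iff]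
    intro f hf
    -- the "coincidence set" of f
    set C : Set (X × X) := {p | f p.1 = f p.2} with hCdef
    have hCclosed : IsClosed C :=
      isClosed_eq (f.continuous.comp continuous_fst) (f.continuous.comp continuous_snd)
    have hCcomp : IsCompact C := hCclosed.isCompact
    have hCne : C.Nonempty := ⟨(Classical.arbitrary X, Classical.arbitrary X), rfl⟩
    have hdistcont : Continuous fun p : X × X => dist p.1 p.2 := continuous_dist
    obtain ⟨p0, hp0C, hp0max⟩ := hCcomp.exists_isMaxOn hCne hdistcont.continuousOn
    set m : ℝ := dist p0.1 p0.2 with hm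
    have hmε : m < ε := by
      have hmem : p0.1 ∈ f ⁻¹' {f p0.2} := hp0C
      have hmem2 : p0.2 ∈ f ⁻¹' {f p0.2} := rfl
      have hfibcl : IsClosed (f ⁻¹' {f p0.2}) := isClosed_singleton.preimage f.continuous
      have hbdd : Bornology.IsBounded (f ⁻¹' {f p0.2}) := hfibcl.isCompact.isBounded
      calc m ≤ Metric.diam (f ⁻¹' {f p0.2}) := Metric.dist_le_diam_of_mem hbdd hmem hmem2
        _ < ε := hf (f p0.2)
    have hm0 : 0 ≤ m := dist_nonneg
    set ε' : ℝ := (m + ε) / 2 with hε'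
    have hmε' : m < ε' := by rw [hε']; linarith
    have hε'ε : ε' < ε := by rw [hε']; linarith
    have hε'0 : 0 ≤ ε' := le_trans hm0 hmε'.le
    set K : Set (X × X) := {p | ε' ≤ dist p.1 p.2} with hKdef
    have hKcomp : IsCompact K := (isClosed_le continuous_const hdistcont).isCompact
    have key : ∃ η > 0, ∀ p ∈ K, η ≤ dist (f p.1) (f p.2) := by
      rcases K.eq_empty_or_nonempty with hKe | hKne
      · exact ⟨1, one_pos, fun p hp => absurd (hKe ▸ hp) (Set.notMem_empty p)⟩
      · obtain ⟨q0, hq0K, hq0min⟩ := hKcomp.exists_isMinOn hKne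
          ((f.continuous.comp continuous_fst).dist (f.continuous.comp continuous_snd)).continuousOn
        refine ⟨dist (f q0.1) (f q0.2), ?_, fun p hp => hq0min hp⟩
        rw [gt_iff_lt, dist_pos]
        intro hfeq
        have hq0C : q0 ∈ C := hfeq
        have : dist q0.1 q0.2 ≤ m := hp0max hq0C
        have : ε' ≤ dist q0.1 q0.2 := hq0K
        linarith
    obtain ⟨η, hη0, hηK⟩ := key
    refine ⟨η / 2, by linarith, fun g hg y => ?_⟩
    have hdiam : Metric.diam (g ⁻¹' {y}) ≤ ε' := by
      apply Metric.diam_le_of_forall_dist_le hε'0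
      intro x hx x' hx'
      have hgx : g x = y := hx
      have hgx' : g x' = y := hx'
      have h1 : dist (f x) (f x') < η := by
        have h2 : dist (g x) (f x) ≤ dist g f := ContinuousMap.dist_apply_le_dist x
        have h3 : dist (g x') (f x') ≤ dist g f := ContinuousMap.dist_apply_le_dist x'
        have h4 : dist (f x) (f x') ≤ dist (f x) (g x) + dist (g x) (g x') + dist (g x') (f x') :=
          dist_triangle4 _ _ _ _
        have h5 : dist (g x) (g x') = 0 := by rw [hgx, hgx', dist_self]
        rw [dist_comm (f x) (g x)] at h4
        have hgf : dist g f < η / 2 := by rwa [Metric.mem_ball] at hg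
        linarith
      by_contra h
      push_neg at h
      exact absurd (hηK (x, x') h.le) (not_le.mpr h1)
    linarith
end

section
/- Let X be a compact metric space, G a group of homeomorphisms of X, and H a normal subgroup of G. For f, p in the closure of G in C(X,X), the product operation (closure(fH), closure(pH)) ↦ closure((f∘p)H) is well defined: if f' ∈ closure(fH) and p' ∈ closure(pH), then f' ∘ p' ∈ closure((f∘p)H). -/
/-- Auxiliary: composing on the right with the same map does not increase distance. -/
lemma comp_dist_le {X : Type*} [MetricSpace X] [CompactSpace X]
    (q₁ q₂ r : C(X, X)) : dist (q₁.comp r) (q₂.comp r) ≤ dist q₁ q₂ := by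
  rw [ContinuousMap.dist_le dist_nonneg]
  intro x
  exact ContinuousMap.dist_apply_le_dist (r x)

/-- Let `X` be a compact metric space, `G` a group of homeomorphisms of
`X` and `H` a normal subgroup of `G`.  For `f, p` in the closure of `G` in `C(X,X)`,
the product `(closure(fH), closure(pH)) ↦ closure((f∘p)H)` is well defined: if
`f' ∈ closure(fH)` and `p' ∈ closure(pH)` then `f' ∘ p' ∈ closure((f∘p)H)`. -/
theorem stmt8 {X : Type*} [MetricSpace X] [CompactSpace X]
    (G H : Set (X ≃ₜ X))
    (hG1 : Homeomorph.refl X ∈ G) (hG2 : ∀ f ∈ G, ∀ g ∈ G, f.trans g ∈ G)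
    (hG3 : ∀ f ∈ G, f.symm ∈ G) (hHG : H ⊆ G)
    (hH1 : Homeomorph.refl X ∈ H) (hH2 : ∀ f ∈ H, ∀ g ∈ H, f.trans g ∈ H)
    (hH3 : ∀ f ∈ H, f.symm ∈ H)
    (hnorm : ∀ g ∈ G, ∀ h ∈ H, (g.symm.trans h).trans g ∈ H)
    (f p : C(X, X))
    (hf : f ∈ closure {q : C(X, X) | ∃ g ∈ G, q = (g : C(X, X))})
    (hp : p ∈ closure {q : C(X, X) | ∃ g ∈ G, q = (g : C(X, X))})
    (f' p' : C(X, X))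
    (hf' : f' ∈ closure {q : C(X, X) | ∃ h ∈ H, q = f.comp (h : C(X, X))})
    (hp' : p' ∈ closure {q : C(X, X) | ∃ h ∈ H, q = p.comp (h : C(X, X))}) :
    f'.comp p' ∈
      closure {q : C(X, X) | ∃ h ∈ H, q = (f.comp p).comp (h : C(X, X))} := by
  set A : Set C(X, X) := {q : C(X, X) | ∃ h ∈ H, q = f.comp (h : C(X, X))} with hA
  set B : Set C(X, X) := {q : C(X, X) | ∃ h ∈ H, q = p.comp (h : C(X, X))} with hB
  set T : Set C(X, X) := {q : C(X, X) | ∃ h ∈ H, q = (f.comp p).comp (h : C(X, X))}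
    with hT
  -- Step 2: every (f∘h)∘(p∘k) with h,k ∈ H is in closure T
  have step2 : ∀ a ∈ A, ∀ b ∈ B, a.comp b ∈ closure T := by
    rintro _ ⟨h, hh, rfl⟩ _ ⟨k, hk, rfl⟩
    rw [Metric.mem_closure_iff]
    intro ε hε
    -- the two continuous maps in g
    have hΦ : Continuous fun g : C(X, X) =>
        (f.comp (h : C(X, X))).comp (g.comp (k : C(X, X))) :=
      (ContinuousMap.continuous_postcomp _).comp (ContinuousMap.continuous_precomp _)
    have hψ : Continuous fun g : C(X, X) => f.comp g :=
      ContinuousMap.continuous_postcomp _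
    -- the open neighborhood of p
    have hU : IsOpen {g : C(X, X) |
        dist ((f.comp (h : C(X, X))).comp (g.comp (k : C(X, X))))
          ((f.comp (h : C(X, X))).comp (p.comp (k : C(X, X)))) < ε / 2 ∧
        dist (f.comp g) (f.comp p) < ε / 2} := by
      apply IsOpen.inter
      · exact isOpen_lt (continuous_dist.comp (hΦ.prodMk continuous_const)) continuous_const
      · exact isOpen_lt (continuous_dist.comp (hψ.prodMk continuous_const)) continuous_const
    have hpU : p ∈ {g : C(X, X) |
        dist ((f.comp (h : C(X, X))).comp (g.comp (k : C(X, X))))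
          ((f.comp (h : C(X, X))).comp (p.comp (k : C(X, X)))) < ε / 2 ∧
        dist (f.comp g) (f.comp p) < ε / 2} := by
      constructor <;> simpa using half_pos hε
    obtain ⟨q, hqU, g, hgG, rfl⟩ :=
      (mem_closure_iff.mp hp) _ hU hpU
    -- the conjugated element of H
    have hgsymm : g.symm ∈ G := hG3 g hgG
    have hconj : ((g.symm.symm.trans h).trans g.symm) ∈ H := hnorm g.symm hgsymm h hh
    set h₀ : X ≃ₜ X := (g.symm.symm.trans h).trans g.symm with hh₀
    have hh' : k.trans h₀ ∈ H := hH2 k hk h₀ hconj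
    refine ⟨(f.comp p).comp ((k.trans h₀ : X ≃ₜ X) : C(X, X)), ⟨k.trans h₀, hh', rfl⟩, ?_⟩
    -- the algebraic identity
    have key : (f.comp (h : C(X, X))).comp ((g : C(X, X)).comp (k : C(X, X)))
        = (f.comp (g : C(X, X))).comp ((k.trans h₀ : X ≃ₜ X) : C(X, X)) := by
      ext x
      simp [hh₀]
    calc dist ((f.comp (h : C(X, X))).comp (p.comp (k : C(X, X))))
          ((f.comp p).comp ((k.trans h₀ : X ≃ₜ X) : C(X, X)))
        ≤ dist ((f.comp (h : C(X, X))).comp (p.comp (k : C(X, X))))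
            ((f.comp (h : C(X, X))).comp (((g : C(X, X))).comp (k : C(X, X)))) +
          dist ((f.comp (h : C(X, X))).comp (((g : C(X, X))).comp (k : C(X, X))))
            ((f.comp p).comp ((k.trans h₀ : X ≃ₜ X) : C(X, X))) := dist_triangle _ _ _
      _ < ε / 2 + ε / 2 := by
          apply add_lt_add_of_lt_of_le
          · rw [dist_comm]; exact hqU.1
          · rw [key]
            exact (comp_dist_le _ _ _).trans hqU.2.le
      _ = ε := add_halves ε
  -- Step 1: joint continuity of composition
  have hAB : (f', p') ∈ closure (A ×ˢ B) := by
    rw [closure_prod_eq]; exact ⟨hf', hp'⟩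
  have hcont : Continuous fun q : C(X, X) × C(X, X) => q.1.comp q.2 :=
    ContinuousMap.continuous_comp'.comp (continuous_snd.prodMk continuous_fst)
  have := map_mem_closure hcont hAB (fun q hq => step2 q.1 hq.1 q.2 hq.2)
  simpa [closure_closure] using this
end

section
/- Let X be a compact metric space, G a group of homeomorphisms of X, and H a normal subgroup of G. Then the set of cosets {closure(fH) : f ∈ closure(G)} with multiplication closure(fH) * closure(pH) = closure((f∘p)H) is a monoid with identity closure(H), and multiplication is continuous with respect to the Hausdorff metric. -/
/-!
Left multiplication is harmless: post-composition with `f` is continuous, so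
`closure (fpH) = closure (f ∘ closure (pH))`, and it is uniformly continuous since `X` is
compact. For right multiplication by `g ∈ G`, normality gives `closure (fgH) = closure (fH) ∘ g`,
and precomposition is 1-Lipschitz for the uniform metric, so
`d_H(closure (fgH), closure (f'gH)) ≤ d_H(closure (fH), closure (f'H))`. Both sides are
continuous in `g`, so this inequality persists for `g` in the closure of `G`; it yields
well-definedness of the product and, combined with the left estimate, its continuity.
-/

open Metric Set TopologicalSpace
open scoped ENNReal

section HausdorffImage

variable {α β : Type*} [PseudoEMetricSpace α] [PseudoEMetricSpace β]

theorem Metric.hausdorffEDist_image_le_of_edist_lt {φ : α → β} {s t : Set α} {δ ε : ℝ≥0∞}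
    (hφ : ∀ a b, edist a b < δ → edist (φ a) (φ b) ≤ ε) (hst : hausdorffEDist s t < δ) :
    hausdorffEDist (φ '' s) (φ '' t) ≤ ε := by
  refine hausdorffEDist_le_of_mem_edist ?_ ?_
  · rintro _ ⟨a, ha, rfl⟩
    obtain ⟨b, hb, hab⟩ := exists_edist_lt_of_hausdorffEDist_lt ha hst
    exact ⟨φ b, mem_image_of_mem φ hb, hφ a b hab⟩
  · rintro _ ⟨b, hb, rfl⟩
    obtain ⟨a, ha, hba⟩ :=
      exists_edist_lt_of_hausdorffEDist_lt hb (hausdorffEDist_comm.trans_lt hst)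
    exact ⟨φ a, mem_image_of_mem φ ha, hφ b a hba⟩

theorem LipschitzWith.hausdorffEDist_image_le {φ : α → β} (hφ : LipschitzWith 1 φ)
    (s t : Set α) : hausdorffEDist (φ '' s) (φ '' t) ≤ hausdorffEDist s t :=
  le_of_forall_gt_imp_ge_of_dense fun _ hδ =>
    hausdorffEDist_image_le_of_edist_lt
      (fun a b hab => (by simpa using hφ a b : edist (φ a) (φ b) ≤ edist a b).trans hab.le) hδ

end HausdorffImage

theorem ContinuousMap.lipschitzWith_precomp {W X Y : Type*} [TopologicalSpace W]
    [CompactSpace W] [TopologicalSpace X] [CompactSpace X] [PseudoMetricSpace Y] (p : C(W, X)) :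
    LipschitzWith 1 fun f : C(X, Y) => f.comp p :=
  LipschitzWith.of_dist_le_mul fun f g => by
    rw [NNReal.coe_one, one_mul, ContinuousMap.dist_le dist_nonneg]
    exact fun x => ContinuousMap.dist_apply_le_dist (p x)

theorem ContinuousMap.comp_mem_closure {X : Type*} [TopologicalSpace X] [LocallyCompactSpace X]
    {S : Set C(X, X)} (hS : ∀ f ∈ S, ∀ g ∈ S, f.comp g ∈ S) {f g : C(X, X)}
    (hf : f ∈ closure S) (hg : g ∈ closure S) : f.comp g ∈ closure S :=
  map_mem_closure₂ (ContinuousMap.continuous_comp'.comp continuous_swap) hf hg hS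

section Topological

variable {X : Type*} [TopologicalSpace X]

def asContinuousMaps (G : Set (X ≃ₜ X)) : Set C(X, X) :=
  {q : C(X, X) | ∃ g ∈ G, q = (g : C(X, X))}

theorem comp_mem_asContinuousMaps {G : Set (X ≃ₜ X)} (hG : ∀ f ∈ G, ∀ g ∈ G, f.trans g ∈ G) :
    ∀ f ∈ asContinuousMaps G, ∀ g ∈ asContinuousMaps G, f.comp g ∈ asContinuousMaps G := by
  rintro _ ⟨f, hf, rfl⟩ _ ⟨g, hg, rfl⟩
  exact ⟨g.trans f, hG g hg f hf, rfl⟩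

-- Spelled like `m` in the theorem, so that `m f` is definitionally `closedCoset H f`.
def closedCoset (H : Set (X ≃ₜ X)) (f : C(X, X)) : Set C(X, X) :=
  closure {q : C(X, X) | ∃ h ∈ H, q = f.comp (h : C(X, X))}

variable {H : Set (X ≃ₜ X)}

theorem closedCoset_comp (f p : C(X, X)) :
    closedCoset H (f.comp p) = closure (f.comp '' closedCoset H p) := by
  rw [closedCoset, closedCoset, closure_image_closure (ContinuousMap.continuous_postcomp f)]
  congr 1
  ext q
  constructor
  · rintro ⟨h, hh, rfl⟩
    exact ⟨p.comp h, ⟨h, hh, rfl⟩, rfl⟩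
  · rintro ⟨_, ⟨h, hh, rfl⟩, rfl⟩
    exact ⟨h, hh, rfl⟩

theorem closedCoset_comp_homeomorph {g : X ≃ₜ X}
    (hg : ∀ h ∈ H, (g.symm.trans h).trans g ∈ H) (hg' : ∀ h ∈ H, (g.trans h).trans g.symm ∈ H)
    (f : C(X, X)) :
    closedCoset H (f.comp g) = closure ((fun q : C(X, X) => q.comp g) '' closedCoset H f) := by
  rw [closedCoset, closedCoset, closure_image_closure (ContinuousMap.continuous_precomp _)]
  congr 1
  ext q
  constructor
  · rintro ⟨h, hh, rfl⟩
    refine ⟨f.comp ((g.symm.trans h).trans g : X ≃ₜ X), ⟨_, hg h hh, rfl⟩, ?_⟩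
    ext x
    simp
  · rintro ⟨_, ⟨h, hh, rfl⟩, rfl⟩
    refine ⟨(g.trans h).trans g.symm, hg' h hh, ?_⟩
    ext x
    simp

end Topological

section Metric

variable {X : Type*} [MetricSpace X] [CompactSpace X] {H : Set (X ≃ₜ X)}

theorem hausdorffEDist_closedCoset_le_edist (a b : C(X, X)) :
    hausdorffEDist (closedCoset H a) (closedCoset H b) ≤ edist a b := by
  have hcomp (h : X ≃ₜ X) : edist (a.comp (h : C(X, X))) (b.comp h) ≤ edist a b := by
    simpa using ContinuousMap.lipschitzWith_precomp (h : C(X, X)) a b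
  rw [closedCoset, closedCoset, hausdorffEDist_closure]
  refine hausdorffEDist_le_of_mem_edist ?_ ?_
  · rintro _ ⟨h, hh, rfl⟩
    exact ⟨b.comp (h : C(X, X)), ⟨h, hh, rfl⟩, hcomp h⟩
  · rintro _ ⟨h, hh, rfl⟩
    exact ⟨a.comp (h : C(X, X)), ⟨h, hh, rfl⟩, (edist_comm _ _).trans_le (hcomp h)⟩

theorem continuous_hausdorffEDist_closedCoset_comp (f f' : C(X, X)) :
    Continuous fun p : C(X, X) =>
      hausdorffEDist (closedCoset H (f.comp p)) (closedCoset H (f'.comp p)) := by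
  have hL : LipschitzWith 1 fun q : C(X, X) =>
      (⟨closedCoset H q, isClosed_closure⟩ : Closeds C(X, X)) :=
    LipschitzWith.of_edist_le hausdorffEDist_closedCoset_le_edist
  exact (hL.continuous.comp (ContinuousMap.continuous_postcomp f)).edist
    (hL.continuous.comp (ContinuousMap.continuous_postcomp f'))

theorem hausdorffEDist_closedCoset_comp_homeomorph_le {g : X ≃ₜ X}
    (hg : ∀ h ∈ H, (g.symm.trans h).trans g ∈ H) (hg' : ∀ h ∈ H, (g.trans h).trans g.symm ∈ H)
    (f f' : C(X, X)) :
    hausdorffEDist (closedCoset H (f.comp g)) (closedCoset H (f'.comp g)) ≤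
      hausdorffEDist (closedCoset H f) (closedCoset H f') := by
  rw [closedCoset_comp_homeomorph hg hg', closedCoset_comp_homeomorph hg hg',
    hausdorffEDist_closure]
  exact (ContinuousMap.lipschitzWith_precomp _).hausdorffEDist_image_le _ _

variable {G : Set (X ≃ₜ X)}

theorem hausdorffEDist_closedCoset_comp_le_of_mem_closure (hG : ∀ g ∈ G, g.symm ∈ G)
    (hnorm : ∀ g ∈ G, ∀ h ∈ H, (g.symm.trans h).trans g ∈ H) {p : C(X, X)}
    (hp : p ∈ closure (asContinuousMaps G)) (f f' : C(X, X)) :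
    hausdorffEDist (closedCoset H (f.comp p)) (closedCoset H (f'.comp p)) ≤
      hausdorffEDist (closedCoset H f) (closedCoset H f') := by
  refine closure_minimal ?_
    (isClosed_le (continuous_hausdorffEDist_closedCoset_comp f f') continuous_const) hp
  rintro _ ⟨g, hg, rfl⟩
  exact hausdorffEDist_closedCoset_comp_homeomorph_le (hnorm g hg)
    (by simpa using hnorm g.symm (hG g hg)) f f'

theorem closedCoset_comp_eq_of_eq (hG : ∀ g ∈ G, g.symm ∈ G)
    (hnorm : ∀ g ∈ G, ∀ h ∈ H, (g.symm.trans h).trans g ∈ H) {f f' p p' : C(X, X)}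
    (hp' : p' ∈ closure (asContinuousMaps G))
    (hf : closedCoset H f = closedCoset H f') (hp : closedCoset H p = closedCoset H p') :
    closedCoset H (f.comp p) = closedCoset H (f'.comp p') := by
  have hright : hausdorffEDist (closedCoset H (f.comp p')) (closedCoset H (f'.comp p')) = 0 :=
    nonpos_iff_eq_zero.1 <| by
      simpa [hf] using hausdorffEDist_closedCoset_comp_le_of_mem_closure hG hnorm hp' f f'
  rw [closedCoset_comp, hp, ← closedCoset_comp]
  exact (isClosed_closure.hausdorffEDist_zero_iff isClosed_closure).1 hright

theorem exists_hausdorffEDist_closedCoset_comp_left_le (f : C(X, X)) {ε : ℝ} (hε : 0 < ε) :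
    ∃ δ, 0 < δ ∧ ∀ p p' : C(X, X),
      hausdorffEDist (closedCoset H p') (closedCoset H p) < ENNReal.ofReal δ →
      hausdorffEDist (closedCoset H (f.comp p')) (closedCoset H (f.comp p)) ≤
        ENNReal.ofReal ε := by
  obtain ⟨δ, hδ, hf⟩ := Metric.uniformContinuous_iff.1
    (ContinuousMap.uniformContinuous_comp (α := X) f
      (CompactSpace.uniformContinuous_of_continuous f.continuous)) ε hε
  refine ⟨δ, hδ, fun p p' hpp => ?_⟩
  rw [closedCoset_comp, closedCoset_comp, hausdorffEDist_closure]
  exact hausdorffEDist_image_le_of_edist_lt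
    (fun a b hab => (edist_lt_ofReal.2 (hf (edist_lt_ofReal.1 hab))).le) hpp

theorem exists_hausdorffEDist_closedCoset_comp_lt (hG : ∀ g ∈ G, g.symm ∈ G)
    (hnorm : ∀ g ∈ G, ∀ h ∈ H, (g.symm.trans h).trans g ∈ H) (f p : C(X, X)) {ε : ℝ}
    (hε : 0 < ε) :
    ∃ δ, 0 < δ ∧ ∀ f' p' : C(X, X),
      p' ∈ closure (asContinuousMaps G) →
      hausdorffEDist (closedCoset H f') (closedCoset H f) < ENNReal.ofReal δ →
      hausdorffEDist (closedCoset H p') (closedCoset H p) < ENNReal.ofReal δ →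
      hausdorffEDist (closedCoset H (f'.comp p')) (closedCoset H (f.comp p)) <
        ENNReal.ofReal ε := by
  obtain ⟨δ, hδ, hleft⟩ :=
    exists_hausdorffEDist_closedCoset_comp_left_le (H := H) f (half_pos hε)
  refine ⟨min δ (ε / 2), by positivity, fun f' p' hp' hf hp => ?_⟩
  calc hausdorffEDist (closedCoset H (f'.comp p')) (closedCoset H (f.comp p))
      ≤ hausdorffEDist (closedCoset H (f'.comp p')) (closedCoset H (f.comp p')) +
          hausdorffEDist (closedCoset H (f.comp p')) (closedCoset H (f.comp p)) :=
        hausdorffEDist_triangle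
    _ < ENNReal.ofReal (ε / 2) + ENNReal.ofReal (ε / 2) :=
        have hright := hleft p p' (hp.trans_le (ENNReal.ofReal_le_ofReal (min_le_left _ _)))
        ENNReal.add_lt_add_of_lt_of_le (ne_top_of_le_ne_top ENNReal.ofReal_ne_top hright)
          ((hausdorffEDist_closedCoset_comp_le_of_mem_closure hG hnorm hp' f' f).trans_lt
            (hf.trans_le (ENNReal.ofReal_le_ofReal (min_le_right _ _)))) hright
    _ = ENNReal.ofReal ε := by
        rw [← ENNReal.ofReal_add (half_pos hε).le (half_pos hε).le, add_halves]

end Metric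

open EMetric in
theorem stmt9_general {X : Type*} [MetricSpace X] [CompactSpace X]
    (G H : Set (X ≃ₜ X))
    (hG1 : Homeomorph.refl X ∈ G) (hG2 : ∀ f ∈ G, ∀ g ∈ G, f.trans g ∈ G)
    (hG3 : ∀ f ∈ G, f.symm ∈ G)
    (hnorm : ∀ g ∈ G, ∀ h ∈ H, (g.symm.trans h).trans g ∈ H) :
    -- notation: `m f = closure (fH)`, `Gbar = closure (G)` inside `C(X,X)`
    let m : C(X, X) → Set C(X, X) :=
      fun f => closure {q : C(X, X) | ∃ h ∈ H, q = f.comp (h : C(X, X))}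
    let Gbar : Set C(X, X) := closure {q : C(X, X) | ∃ g ∈ G, q = (g : C(X, X))}
    -- the product is well defined on cosets
    (∀ f ∈ Gbar, ∀ f' ∈ Gbar, ∀ p ∈ Gbar, ∀ p' ∈ Gbar,
      m f = m f' → m p = m p' → m (f.comp p) = m (f'.comp p')) ∧
    -- the product of two cosets is again a coset (closure of `G` is closed
    -- under composition)
    (∀ f ∈ Gbar, ∀ p ∈ Gbar, f.comp p ∈ Gbar) ∧
    -- associativity
    (∀ f ∈ Gbar, ∀ p ∈ Gbar, ∀ q ∈ Gbar,
      m ((f.comp p).comp q) = m (f.comp (p.comp q))) ∧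
    -- `closure(H) = m id` is a two-sided identity
    ((ContinuousMap.id X) ∈ Gbar ∧
      ∀ f ∈ Gbar, m (f.comp (ContinuousMap.id X)) = m f ∧
        m ((ContinuousMap.id X).comp f) = m f) ∧
    -- multiplication is continuous for the Hausdorff metric
    (∀ f ∈ Gbar, ∀ p ∈ Gbar, ∀ ε : ℝ, 0 < ε → ∃ δ : ℝ, 0 < δ ∧
      ∀ f' ∈ Gbar, ∀ p' ∈ Gbar,
        hausdorffEdist (m f') (m f) < ENNReal.ofReal δ →
        hausdorffEdist (m p') (m p) < ENNReal.ofReal δ →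
        hausdorffEdist (m (f'.comp p')) (m (f.comp p)) < ENNReal.ofReal ε) := by
  intro m Gbar
  refine ⟨fun _ _ _ _ _ _ _ hp' => closedCoset_comp_eq_of_eq hG3 hnorm hp',
    fun _ hf _ hp => ContinuousMap.comp_mem_closure (comp_mem_asContinuousMaps hG2) hf hp,
    fun _ _ _ _ _ _ => rfl,
    ⟨subset_closure ⟨Homeomorph.refl X, hG1, rfl⟩, fun _ _ => ⟨rfl, rfl⟩⟩,
    fun f _ p _ ε hε => ?_⟩
  obtain ⟨δ, hδ, hcont⟩ := exists_hausdorffEDist_closedCoset_comp_lt hG3 hnorm f p hε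
  exact ⟨δ, hδ, fun f' _ p' => hcont f' p'⟩

open EMetric in
/-- Let `X` be a compact metric space, `G` a group of homeomorphisms of
`X` and `H ⊴ G`.  On the set of cosets `{closure(fH) : f ∈ closure(G)}` the
multiplication `closure(fH) * closure(pH) = closure((f∘p)H)` is well defined,
associative, has identity `closure(H)` (so these cosets form a monoid), and it is
continuous with respect to the Hausdorff metric. -/
theorem stmt9 {X : Type*} [MetricSpace X] [CompactSpace X]
    (G H : Set (X ≃ₜ X))
    (hG1 : Homeomorph.refl X ∈ G) (hG2 : ∀ f ∈ G, ∀ g ∈ G, f.trans g ∈ G)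
    (hG3 : ∀ f ∈ G, f.symm ∈ G) (hHG : H ⊆ G)
    (hH1 : Homeomorph.refl X ∈ H) (hH2 : ∀ f ∈ H, ∀ g ∈ H, f.trans g ∈ H)
    (hH3 : ∀ f ∈ H, f.symm ∈ H)
    (hnorm : ∀ g ∈ G, ∀ h ∈ H, (g.symm.trans h).trans g ∈ H) :
    -- notation: `m f = closure (fH)`, `Gbar = closure (G)` inside `C(X,X)`
    let m : C(X, X) → Set C(X, X) :=
      fun f => closure {q : C(X, X) | ∃ h ∈ H, q = f.comp (h : C(X, X))}
    let Gbar : Set C(X, X) := closure {q : C(X, X) | ∃ g ∈ G, q = (g : C(X, X))}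
    -- the product is well defined on cosets
    (∀ f ∈ Gbar, ∀ f' ∈ Gbar, ∀ p ∈ Gbar, ∀ p' ∈ Gbar,
      m f = m f' → m p = m p' → m (f.comp p) = m (f'.comp p')) ∧
    -- the product of two cosets is again a coset (closure of `G` is closed
    -- under composition)
    (∀ f ∈ Gbar, ∀ p ∈ Gbar, f.comp p ∈ Gbar) ∧
    -- associativity
    (∀ f ∈ Gbar, ∀ p ∈ Gbar, ∀ q ∈ Gbar,
      m ((f.comp p).comp q) = m (f.comp (p.comp q))) ∧
    -- `closure(H) = m id` is a two-sided identity
    ((ContinuousMap.id X) ∈ Gbar ∧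
      ∀ f ∈ Gbar, m (f.comp (ContinuousMap.id X)) = m f ∧
        m ((ContinuousMap.id X).comp f) = m f) ∧
    -- multiplication is continuous for the Hausdorff metric
    (∀ f ∈ Gbar, ∀ p ∈ Gbar, ∀ ε : ℝ, 0 < ε → ∃ δ : ℝ, 0 < δ ∧
      ∀ f' ∈ Gbar, ∀ p' ∈ Gbar,
        hausdorffEdist (m f') (m f) < ENNReal.ofReal δ →
        hausdorffEdist (m p') (m p) < ENNReal.ofReal δ →
        hausdorffEdist (m (f'.comp p')) (m (f.comp p)) < ENNReal.ofReal ε) :=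
  stmt9_general G H hG1 hG2 hG3 hnorm
end

section
/- Let X be a compact metric space, G a group of homeomorphisms of X, and H a normal subgroup of G that is closed in G (with the uniform topology). Then the map φ : G/H → (closure(G)/closure(H))ˣ, φ(gH) = closure(gH), is an injective group homomorphism and a topological embedding: the Hausdorff-metric distance between closure(g₁H) and closure(g₂H) equals the Hausdorff-metric distance between g₁H and g₂H as subsets of G. -/
/-! If `closure (g₁H) = closure (g₂H)` then `g₂ ∈ closure (g₁H)`; postcomposing with the
homeomorphism `g₁⁻¹` of `C(X, X)` puts `g₁⁻¹g₂` in `closure H ∩ G = H`. The distance statement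
holds because the Hausdorff distance does not see closures. -/

theorem Homeomorph.symm_comp_mem_closure_of_mem_closure_comp {α β γ : Type*}
    [TopologicalSpace α] [TopologicalSpace β] [TopologicalSpace γ]
    (g : β ≃ₜ γ) {H : Set (α ≃ₜ β)} {q : C(α, γ)}
    (hq : q ∈ closure {p : C(α, γ) | ∃ h ∈ H, p = (g : C(β, γ)).comp (h : C(α, β))}) :
    (g.symm : C(γ, β)).comp q ∈ closure {p : C(α, β) | ∃ h ∈ H, p = (h : C(α, β))} := by
  refine closure_mono ?_ <|
    image_closure_subset_closure_image (ContinuousMap.continuous_postcomp _) ⟨q, hq, rfl⟩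
  rintro _ ⟨_, ⟨h, hh, rfl⟩, rfl⟩
  exact ⟨h, hh, by rw [← ContinuousMap.comp_assoc, symm_comp_toContinuousMap,
    ContinuousMap.id_comp]⟩

theorem Homeomorph.eq_trans_of_symm_comp_eq {α β γ : Type*}
    [TopologicalSpace α] [TopologicalSpace β] [TopologicalSpace γ]
    {f : α ≃ₜ γ} {g : β ≃ₜ γ} {h : α ≃ₜ β}
    (hfg : (g.symm : C(γ, β)).comp (f : C(α, γ)) = (h : C(α, β))) :
    f = h.trans g :=
  Homeomorph.ext fun x => by
    simpa using congr_arg g (ContinuousMap.congr_fun hfg x)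

open EMetric in
theorem stmt12_general {X : Type*} [MetricSpace X] [CompactSpace X]
    (G H : Set (X ≃ₜ X))
    (hG2 : ∀ f ∈ G, ∀ g ∈ G, f.trans g ∈ G)
    (hG3 : ∀ f ∈ G, f.symm ∈ G)
    (hH1 : Homeomorph.refl X ∈ H)
    -- `H` is closed in `G` (for the uniform topology of `C(X,X)`)
    (hHclosed : closure {q : C(X, X) | ∃ h ∈ H, q = (h : C(X, X))} ∩
        {q : C(X, X) | ∃ g ∈ G, q = (g : C(X, X))} ⊆
      {q : C(X, X) | ∃ h ∈ H, q = (h : C(X, X))}) :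
    let coset : (X ≃ₜ X) → Set C(X, X) :=
      fun g => {q : C(X, X) | ∃ h ∈ H, q = ((g : C(X, X))).comp (h : C(X, X))}
    -- `φ` is injective: equal coset closures force equal cosets
    (∀ g₁ ∈ G, ∀ g₂ ∈ G, closure (coset g₁) = closure (coset g₂) →
      ∃ h ∈ H, g₂ = h.trans g₁) ∧
    -- `φ` is an embedding: taking closures does not change Hausdorff distances
    (∀ g₁ ∈ G, ∀ g₂ ∈ G,
      hausdorffEdist (closure (coset g₁)) (closure (coset g₂)) =
        hausdorffEdist (coset g₁) (coset g₂)) := by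
  intro coset
  refine ⟨fun g₁ hg₁ g₂ hg₂ hcl => ?_, fun _ _ _ _ => Metric.hausdorffEDist_closure⟩
  have hg₂_mem : (g₂ : C(X, X)) ∈ closure (coset g₁) :=
    hcl ▸ subset_closure ⟨Homeomorph.refl X, hH1, rfl⟩
  obtain ⟨h, hh, hquot⟩ := hHclosed
    ⟨g₁.symm_comp_mem_closure_of_mem_closure_comp hg₂_mem,
      g₂.trans g₁.symm, hG2 _ hg₂ _ (hG3 _ hg₁), rfl⟩
  exact ⟨h, hh, Homeomorph.eq_trans_of_symm_comp_eq hquot⟩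

open EMetric in
/-- With `X` compact metric, `G` a group of homeomorphisms of `X`, and
`H ⊴ G` closed in `G` (uniform topology), the map `φ : G/H → (closure G/closure H)ˣ`,
`φ(gH) = closure(gH)`, is injective and a topological embedding: the Hausdorff
distance between `closure(g₁H)` and `closure(g₂H)` equals the Hausdorff distance
between the cosets `g₁H` and `g₂H` themselves. -/
theorem stmt12 {X : Type*} [MetricSpace X] [CompactSpace X]
    (G H : Set (X ≃ₜ X))
    (hG1 : Homeomorph.refl X ∈ G) (hG2 : ∀ f ∈ G, ∀ g ∈ G, f.trans g ∈ G)
    (hG3 : ∀ f ∈ G, f.symm ∈ G) (hHG : H ⊆ G)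
    (hH1 : Homeomorph.refl X ∈ H) (hH2 : ∀ f ∈ H, ∀ g ∈ H, f.trans g ∈ H)
    (hH3 : ∀ f ∈ H, f.symm ∈ H)
    (hnorm : ∀ g ∈ G, ∀ h ∈ H, (g.symm.trans h).trans g ∈ H)
    -- `H` is closed in `G` (for the uniform topology of `C(X,X)`)
    (hHclosed : closure {q : C(X, X) | ∃ h ∈ H, q = (h : C(X, X))} ∩
        {q : C(X, X) | ∃ g ∈ G, q = (g : C(X, X))} ⊆
      {q : C(X, X) | ∃ h ∈ H, q = (h : C(X, X))}) :
    let coset : (X ≃ₜ X) → Set C(X, X) :=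
      fun g => {q : C(X, X) | ∃ h ∈ H, q = ((g : C(X, X))).comp (h : C(X, X))}
    -- `φ` is injective: equal coset closures force equal cosets
    (∀ g₁ ∈ G, ∀ g₂ ∈ G, closure (coset g₁) = closure (coset g₂) →
      ∃ h ∈ H, g₂ = h.trans g₁) ∧
    -- `φ` is an embedding: taking closures does not change Hausdorff distances
    (∀ g₁ ∈ G, ∀ g₂ ∈ G,
      hausdorffEdist (closure (coset g₁)) (closure (coset g₂)) =
        hausdorffEdist (coset g₁) (coset g₂)) :=
  stmt12_general G H hG2 hG3 hH1 hHclosed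
end

section
/- Let X be a compact metric space, G ≤ Homeo(X) closed in C(X,X), and H ⊴ G closed in G. Then the quotient group G/H is completely metrizable, with complete metric D'(g₁H, g₂H) = D(g₁H, g₂H) + D(g₁⁻¹H, g₂⁻¹H), where D is the Hausdorff metric induced by the uniform metric. -/
/-!
Cosets `gH` are subsets of `C(X, X)` with the uniform metric. Composing on the right with
`h ∈ H` does not increase uniform distances, so `D(g₁H, g₂H) ≤ d(g₁, g₂)`; normality makes
`g⁻¹H` depend only on `gH`, so `D'` is well defined on `G/H`, and closedness of `H` in `G`
makes it definite. For completeness, pass to a subsequence whose `D'`-increments are below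
`2⁻ᵏ` and choose representatives in successive cosets that are `2⁻ᵏ`-close. They converge
uniformly to some `g ∈ G` because `G` is closed, their inverses converge to `g⁻¹` because
`g⁻¹` is uniformly continuous on the compact space `X`, hence the subsequence of cosets
converges to `gH` in `D'`, and then so does the whole Cauchy sequence.
-/

open Filter Topology Metric
open scoped ENNReal

section CauchySubseq

variable {α : Type*} {d : α → α → ℝ≥0∞} {x : ℕ → α}

theorem exists_strictMono_lt_of_cauchy
    (hx : ∀ ε > 0, ∃ N, ∀ a ≥ N, ∀ b ≥ N, d (x a) (x b) < ε)
    {ε : ℕ → ℝ≥0∞} (hε : ∀ k, 0 < ε k) :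
    ∃ φ : ℕ → ℕ, StrictMono φ ∧ ∀ k, d (x (φ k)) (x (φ (k + 1))) < ε k := by
  obtain ⟨φ, hφ, hlt⟩ := extraction_forall_of_eventually'
    (P := fun k m => ∀ b ≥ m, d (x m) (x b) < ε k) fun k => by
      obtain ⟨N, hN⟩ := hx (ε k) (hε k)
      exact ⟨N, fun m hm b hb => hN m hm b (hm.trans hb)⟩
  exact ⟨φ, hφ, fun k => hlt k _ (hφ k.lt_succ_self).le⟩

theorem tendsto_of_cauchy_of_tendsto_subseq (htri : ∀ a b c, d a c ≤ d a b + d b c)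
    (hx : ∀ ε > 0, ∃ N, ∀ a ≥ N, ∀ b ≥ N, d (x a) (x b) < ε)
    {φ : ℕ → ℕ} (hφ : StrictMono φ) {g : α}
    (hsub : Tendsto (fun k => d (x (φ k)) g) atTop (𝓝 0)) :
    Tendsto (fun n => d (x n) g) atTop (𝓝 0) := by
  rw [ENNReal.tendsto_atTop_zero] at hsub ⊢
  intro ε hε
  obtain ⟨N, hN⟩ := hx (ε / 2) (ENNReal.half_pos hε.ne')
  obtain ⟨K, hK⟩ := hsub (ε / 2) (ENNReal.half_pos hε.ne')
  have hφN : N ≤ φ (max K N) := (le_max_right K N).trans (hφ.id_le _)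
  refine ⟨N, fun n hn => ?_⟩
  calc d (x n) g ≤ d (x n) (x (φ (max K N))) + d (x (φ (max K N))) g := htri _ _ _
    _ ≤ ε / 2 + ε / 2 := add_le_add (hN n hn _ hφN).le (hK _ (le_max_left K N))
    _ = ε := ENNReal.add_halves ε

end CauchySubseq

theorem Metric.exists_seq_mem_edist_lt_of_hausdorffEDist_lt {α : Type*} [PseudoEMetricSpace α]
    {s : ℕ → Set α} {ε : ℕ → ℝ≥0∞} (hs : ∀ k, hausdorffEDist (s k) (s (k + 1)) < ε k)
    {x₀ : α} (hx₀ : x₀ ∈ s 0) :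
    ∃ x : ℕ → α, (∀ k, x k ∈ s k) ∧ ∀ k, edist (x k) (x (k + 1)) < ε k := by
  choose! next hnext_mem hnext_lt using
    fun k y (hy : y ∈ s k) => exists_edist_lt_of_hausdorffEDist_lt hy (hs k)
  let x : ℕ → α := fun k => Nat.rec x₀ next k
  have hx : ∀ k, x k ∈ s k := fun k => by
    induction k with
    | zero => exact hx₀
    | succ k ih => exact hnext_mem k _ ih
  exact ⟨x, hx, fun k => hnext_lt k _ (hx k)⟩

namespace Homeomorph

variable {X : Type*} [MetricSpace X] [CompactSpace X]

theorem dist_symm_le (a g : X ≃ₜ X) :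
    dist (a.symm : C(X, X)) (g.symm : C(X, X)) ≤
      dist ((g.symm : C(X, X)).comp a) (ContinuousMap.id X) := by
  refine (ContinuousMap.dist_le dist_nonneg).2 fun y => ?_
  simpa [dist_comm] using
    ContinuousMap.dist_apply_le_dist (f := (g.symm : C(X, X)).comp a) (g := .id X) (a.symm y)

theorem tendsto_symm_of_tendsto {ι : Type*} {l : Filter ι} {u : ι → X ≃ₜ X} {g : X ≃ₜ X}
    (hu : Tendsto (fun i => (u i : C(X, X))) l (𝓝 g)) :
    Tendsto (fun i => ((u i).symm : C(X, X))) l (𝓝 (g.symm : C(X, X))) := by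
  have hcomp : Tendsto (fun i => (g.symm : C(X, X)).comp (u i)) l (𝓝 (ContinuousMap.id X)) := by
    simpa [Function.comp_def] using
      ((ContinuousMap.continuous_postcomp (g.symm : C(X, X))).tendsto _).comp hu
  rw [tendsto_iff_dist_tendsto_zero] at hcomp ⊢
  exact squeeze_zero (fun _ => dist_nonneg) (fun i => dist_symm_le (u i) g) hcomp

end Homeomorph

section Coset

variable {X : Type*} [TopologicalSpace X] (H : Set (X ≃ₜ X))

def homeoCoset (g : X ≃ₜ X) : Set C(X, X) :=
  {q | ∃ h ∈ H, q = (g : C(X, X)).comp h}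

variable {H}

theorem coe_mem_homeoCoset (hH1 : Homeomorph.refl X ∈ H) (g : X ≃ₜ X) :
    (g : C(X, X)) ∈ homeoCoset H g :=
  ⟨_, hH1, rfl⟩

theorem homeoCoset_trans_of_mem (hH2 : ∀ f ∈ H, ∀ g ∈ H, f.trans g ∈ H)
    (hH3 : ∀ f ∈ H, f.symm ∈ H) (g : X ≃ₜ X) {h : X ≃ₜ X} (hh : h ∈ H) :
    homeoCoset H (h.trans g) = homeoCoset H g := by
  ext q
  constructor
  · rintro ⟨h', hh', rfl⟩
    exact ⟨h'.trans h, hH2 h' hh' h hh, rfl⟩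
  · rintro ⟨h', hh', rfl⟩
    refine ⟨h'.trans h.symm, hH2 h' hh' h.symm (hH3 h hh), ?_⟩
    ext y
    simp

theorem homeoCoset_symm_trans_of_mem (hH2 : ∀ f ∈ H, ∀ g ∈ H, f.trans g ∈ H)
    (hH3 : ∀ f ∈ H, f.symm ∈ H) {g : X ≃ₜ X} (hg : ∀ h ∈ H, (g.symm.trans h).trans g ∈ H)
    {h : X ≃ₜ X} (hh : h ∈ H) :
    homeoCoset H (h.trans g).symm = homeoCoset H g.symm := by
  have hconj : (h.trans g).symm = ((g.symm.trans h.symm).trans g).trans g.symm := by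
    ext y
    simp
  rw [hconj, homeoCoset_trans_of_mem hH2 hH3 _ (hg _ (hH3 h hh))]

theorem symm_comp_mem_closure_of_mem_closure_homeoCoset {g : X ≃ₜ X} {q : C(X, X)}
    (hq : q ∈ closure (homeoCoset H g)) :
    (g.symm : C(X, X)).comp q ∈ closure {p : C(X, X) | ∃ h ∈ H, p = h} := by
  refine closure_mono ?_ <|
    image_closure_subset_closure_image (ContinuousMap.continuous_postcomp _) ⟨q, hq, rfl⟩
  rintro _ ⟨_, ⟨h, hh, rfl⟩, rfl⟩
  exact ⟨h, hh, by ext y; simp⟩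

end Coset

section CosetDist

variable {X : Type*} [MetricSpace X] [CompactSpace X] (H : Set (X ≃ₜ X))

noncomputable def cosetDist (g₁ g₂ : X ≃ₜ X) : ℝ≥0∞ :=
  hausdorffEDist (homeoCoset H g₁) (homeoCoset H g₂) +
    hausdorffEDist (homeoCoset H g₁.symm) (homeoCoset H g₂.symm)

theorem cosetDist_self (g : X ≃ₜ X) : cosetDist H g g = 0 := by
  simp [cosetDist]

theorem cosetDist_comm (g₁ g₂ : X ≃ₜ X) : cosetDist H g₁ g₂ = cosetDist H g₂ g₁ := by
  simp only [cosetDist, hausdorffEDist_comm]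

theorem cosetDist_triangle (g₁ g₂ g₃ : X ≃ₜ X) :
    cosetDist H g₁ g₃ ≤ cosetDist H g₁ g₂ + cosetDist H g₂ g₃ :=
  (add_le_add hausdorffEDist_triangle hausdorffEDist_triangle).trans_eq (add_add_add_comm _ _ _ _)

theorem hausdorffEDist_homeoCoset_le (a b : X ≃ₜ X) :
    hausdorffEDist (homeoCoset H a) (homeoCoset H b) ≤ edist (a : C(X, X)) b := by
  have hcomp : ∀ u v h : C(X, X), edist (u.comp h) (v.comp h) ≤ edist u v := fun u v h => by
    rw [edist_dist, edist_dist]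
    exact ENNReal.ofReal_le_ofReal <| (ContinuousMap.dist_le dist_nonneg).2 fun y =>
      ContinuousMap.dist_apply_le_dist (f := u) (g := v) (h y)
  refine hausdorffEDist_le_of_mem_edist ?_ ?_
  · rintro _ ⟨h, hh, rfl⟩
    exact ⟨_, ⟨h, hh, rfl⟩, hcomp a b h⟩
  · rintro _ ⟨h, hh, rfl⟩
    exact ⟨_, ⟨h, hh, rfl⟩, (hcomp b a h).trans_eq (edist_comm _ _)⟩

theorem cosetDist_le_edist (a b : X ≃ₜ X) :
    cosetDist H a b ≤ edist (a : C(X, X)) b + edist (a.symm : C(X, X)) b.symm :=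
  add_le_add (hausdorffEDist_homeoCoset_le H a b) (hausdorffEDist_homeoCoset_le H a.symm b.symm)

theorem cosetDist_ne_top (a b : X ≃ₜ X) : cosetDist H a b ≠ ⊤ :=
  ((cosetDist_le_edist H a b).trans_lt
    (ENNReal.add_lt_top.2 ⟨edist_lt_top _ _, edist_lt_top _ _⟩)).ne

theorem tendsto_cosetDist_of_tendsto {u : ℕ → X ≃ₜ X} {g : X ≃ₜ X}
    (hu : Tendsto (fun k => (u k : C(X, X))) atTop (𝓝 g)) :
    Tendsto (fun k => cosetDist H (u k) g) atTop (𝓝 0) := by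
  have hsymm := Homeomorph.tendsto_symm_of_tendsto hu
  rw [tendsto_iff_edist_tendsto_0] at hu hsymm
  refine tendsto_of_tendsto_of_tendsto_of_le_of_le tendsto_const_nhds (by simpa using hu.add hsymm)
    (fun _ => zero_le) fun k => cosetDist_le_edist H (u k) g

variable {H}

theorem cosetDist_trans_left (hH2 : ∀ f ∈ H, ∀ g ∈ H, f.trans g ∈ H)
    (hH3 : ∀ f ∈ H, f.symm ∈ H) {g : X ≃ₜ X} (hg : ∀ h ∈ H, (g.symm.trans h).trans g ∈ H)
    {h : X ≃ₜ X} (hh : h ∈ H) (b : X ≃ₜ X) :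
    cosetDist H (h.trans g) b = cosetDist H g b := by
  rw [cosetDist, cosetDist, homeoCoset_trans_of_mem hH2 hH3 g hh,
    homeoCoset_symm_trans_of_mem hH2 hH3 hg hh]

theorem exists_eq_trans_of_cosetDist_eq_zero {G : Set (X ≃ₜ X)}
    (hG2 : ∀ f ∈ G, ∀ g ∈ G, f.trans g ∈ G) (hG3 : ∀ f ∈ G, f.symm ∈ G)
    (hH1 : Homeomorph.refl X ∈ H)
    (hHclosed : closure {q : C(X, X) | ∃ h ∈ H, q = (h : C(X, X))} ∩
        {q : C(X, X) | ∃ g ∈ G, q = (g : C(X, X))} ⊆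
      {q : C(X, X) | ∃ h ∈ H, q = (h : C(X, X))})
    {g₁ g₂ : X ≃ₜ X} (hg₁ : g₁ ∈ G) (hg₂ : g₂ ∈ G) (h0 : cosetDist H g₁ g₂ = 0) :
    ∃ h ∈ H, g₂ = h.trans g₁ := by
  have hcl : (g₂ : C(X, X)) ∈ closure (homeoCoset H g₁) := by
    rw [hausdorffEDist_zero_iff_closure_eq_closure.1 (add_eq_zero.1 h0).1]
    exact subset_closure (coe_mem_homeoCoset hH1 g₂)
  obtain ⟨h, hh, hq⟩ := hHclosed ⟨symm_comp_mem_closure_of_mem_closure_homeoCoset hcl,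
    g₂.trans g₁.symm, hG2 g₂ hg₂ g₁.symm (hG3 g₁ hg₁), rfl⟩
  refine ⟨h, hh, Homeomorph.ext fun y => ?_⟩
  simpa using congrArg g₁ (DFunLike.congr_fun hq y)

theorem exists_cauchySeq_of_cosetDist_lt (hH1 : Homeomorph.refl X ∈ H) {y : ℕ → X ≃ₜ X}
    (hy : ∀ k, cosetDist H (y k) (y (k + 1)) < 1 / 2 ^ k) :
    ∃ v : ℕ → X ≃ₜ X, (∀ k, ∃ h ∈ H, v k = h.trans (y k)) ∧
      CauchySeq fun k => (v k : C(X, X)) := by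
  obtain ⟨u, hu_mem, hu_lt⟩ := exists_seq_mem_edist_lt_of_hausdorffEDist_lt
    (s := fun k => homeoCoset H (y k)) (fun k => le_self_add.trans_lt (hy k))
    (coe_mem_homeoCoset hH1 (y 0))
  choose h hh hu using hu_mem
  have hvu : (fun k => (((h k).trans (y k) : X ≃ₜ X) : C(X, X))) = u := funext fun k => (hu k).symm
  refine ⟨fun k => (h k).trans (y k), fun k => ⟨h k, hh k, rfl⟩, ?_⟩
  rw [hvu]
  exact cauchySeq_of_edist_le_geometric_two 1 ENNReal.one_ne_top fun k => (hu_lt k).le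

theorem exists_tendsto_cosetDist_of_cauchy {G : Set (X ≃ₜ X)}
    (hG2 : ∀ f ∈ G, ∀ g ∈ G, f.trans g ∈ G) (hHG : H ⊆ G) (hH1 : Homeomorph.refl X ∈ H)
    (hH2 : ∀ f ∈ H, ∀ g ∈ H, f.trans g ∈ H) (hH3 : ∀ f ∈ H, f.symm ∈ H)
    (hnorm : ∀ g ∈ G, ∀ h ∈ H, (g.symm.trans h).trans g ∈ H)
    (hGclosed : IsClosed {q : C(X, X) | ∃ g ∈ G, q = g}) {F : ℕ → X ≃ₜ X} (hFG : ∀ n, F n ∈ G)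
    (hF : ∀ ε > 0, ∃ N, ∀ a ≥ N, ∀ b ≥ N, cosetDist H (F a) (F b) < ε) :
    ∃ g ∈ G, Tendsto (fun n => cosetDist H (F n) g) atTop (𝓝 0) := by
  obtain ⟨φ, hφ, hφ_lt⟩ := exists_strictMono_lt_of_cauchy hF (ε := fun k => 1 / 2 ^ k)
    fun k => ENNReal.div_pos one_ne_zero (ENNReal.pow_ne_top ENNReal.ofNat_ne_top)
  obtain ⟨v, hvH, hv⟩ := exists_cauchySeq_of_cosetDist_lt hH1 hφ_lt
  have hvG : ∀ k, v k ∈ G := fun k => by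
    obtain ⟨h, hh, hvk⟩ := hvH k
    exact hvk ▸ hG2 h (hHG hh) _ (hFG _)
  obtain ⟨q, hq⟩ := cauchySeq_tendsto_of_complete hv
  obtain ⟨g, hg, rfl⟩ : q ∈ {q : C(X, X) | ∃ g ∈ G, q = g} :=
    hGclosed.mem_of_tendsto hq (.of_forall fun k => ⟨v k, hvG k, rfl⟩)
  refine ⟨g, hg, tendsto_of_cauchy_of_tendsto_subseq (cosetDist_triangle H) hF hφ ?_⟩
  refine (tendsto_cosetDist_of_tendsto H hq).congr fun k => ?_
  obtain ⟨h, hh, hvk⟩ := hvH k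
  rw [hvk, cosetDist_trans_left hH2 hH3 (hnorm _ (hFG _)) hh]

end CosetDist

open EMetric in
theorem stmt13_general {X : Type*} [MetricSpace X] [CompactSpace X]
    (G H : Set (X ≃ₜ X))
    (hG2 : ∀ f ∈ G, ∀ g ∈ G, f.trans g ∈ G)
    (hG3 : ∀ f ∈ G, f.symm ∈ G) (hHG : H ⊆ G)
    (hH1 : Homeomorph.refl X ∈ H) (hH2 : ∀ f ∈ H, ∀ g ∈ H, f.trans g ∈ H)
    (hH3 : ∀ f ∈ H, f.symm ∈ H)
    (hnorm : ∀ g ∈ G, ∀ h ∈ H, (g.symm.trans h).trans g ∈ H)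
    (hGclosed : closure {q : C(X, X) | ∃ g ∈ G, q = (g : C(X, X))} =
      {q : C(X, X) | ∃ g ∈ G, q = (g : C(X, X))})
    (hHclosed : closure {q : C(X, X) | ∃ h ∈ H, q = (h : C(X, X))} ∩
        {q : C(X, X) | ∃ g ∈ G, q = (g : C(X, X))} ⊆
      {q : C(X, X) | ∃ h ∈ H, q = (h : C(X, X))}) :
    let coset : (X ≃ₜ X) → Set C(X, X) :=
      fun g => {q : C(X, X) | ∃ h ∈ H, q = ((g : C(X, X))).comp (h : C(X, X))}
    let D' : (X ≃ₜ X) → (X ≃ₜ X) → ENNReal := fun g₁ g₂ =>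
      hausdorffEdist (coset g₁) (coset g₂) +
        hausdorffEdist (coset g₁.symm) (coset g₂.symm)
    -- `D'` is a metric on the set of cosets `gH`, `g ∈ G`:
    (∀ g₁ ∈ G, ∀ g₂ ∈ G, (D' g₁ g₂ = 0 ↔ ∃ h ∈ H, g₂ = h.trans g₁)) ∧
    (∀ g₁ ∈ G, ∀ g₂ ∈ G, D' g₁ g₂ = D' g₂ g₁) ∧
    (∀ g₁ ∈ G, ∀ g₂ ∈ G, ∀ g₃ ∈ G, D' g₁ g₃ ≤ D' g₁ g₂ + D' g₂ g₃) ∧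
    (∀ g₁ ∈ G, ∀ g₂ ∈ G, D' g₁ g₂ ≠ ⊤) ∧
    -- `D'` is complete on `G/H`
    (∀ F : ℕ → (X ≃ₜ X), (∀ n, F n ∈ G) →
      (∀ ε : ℝ, 0 < ε → ∃ N : ℕ, ∀ a ≥ N, ∀ b ≥ N,
        D' (F a) (F b) < ENNReal.ofReal ε) →
      ∃ g ∈ G, Filter.Tendsto (fun n => D' (F n) g) Filter.atTop (nhds 0)) := by
  intro coset D'
  refine ⟨fun g₁ hg₁ g₂ hg₂ => ⟨?_, ?_⟩, fun g₁ _ g₂ _ => cosetDist_comm H g₁ g₂,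
    fun g₁ _ g₂ _ g₃ _ => cosetDist_triangle H g₁ g₂ g₃,
    fun g₁ _ g₂ _ => cosetDist_ne_top H g₁ g₂, fun F hFG hF => ?_⟩
  · exact exists_eq_trans_of_cosetDist_eq_zero hG2 hG3 hH1 hHclosed hg₁ hg₂
  · rintro ⟨h, hh, rfl⟩
    exact (cosetDist_comm H _ _).trans <|
      (cosetDist_trans_left hH2 hH3 (hnorm g₁ hg₁) hh g₁).trans (cosetDist_self H g₁)
  have hF' : ∀ ε > 0, ∃ N, ∀ a ≥ N, ∀ b ≥ N, D' (F a) (F b) < ε := fun ε hε => by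
    obtain ⟨r, -, hr0, hrε⟩ := ENNReal.lt_iff_exists_real_btwn.1 hε
    obtain ⟨N, hN⟩ := hF r (ENNReal.ofReal_pos.1 hr0)
    exact ⟨N, fun a ha b hb => (hN a ha b hb).trans hrε⟩
  exact exists_tendsto_cosetDist_of_cauchy hG2 hHG hH1 hH2 hH3 hnorm
    (closure_eq_iff_isClosed.1 hGclosed) hFG hF'

open EMetric in
/-- Let `X` be a compact metric space, `G` a group of homeomorphisms
of `X` closed in `C(X,X)`, and `H ⊴ G` closed in `G`.  Then the quotient group `G/H`
is completely metrizable with complete metric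
`D'(g₁H, g₂H) = D(g₁H, g₂H) + D(g₁⁻¹H, g₂⁻¹H)` where `D` is the Hausdorff metric
induced by the uniform metric: `D'` vanishes exactly on equal cosets, is symmetric,
satisfies the triangle inequality, and every `D'`-Cauchy sequence of cosets of
elements of `G` converges to the coset of an element of `G`. -/
theorem stmt13 {X : Type*} [MetricSpace X] [CompactSpace X]
    (G H : Set (X ≃ₜ X))
    (hG1 : Homeomorph.refl X ∈ G) (hG2 : ∀ f ∈ G, ∀ g ∈ G, f.trans g ∈ G)
    (hG3 : ∀ f ∈ G, f.symm ∈ G) (hHG : H ⊆ G)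
    (hH1 : Homeomorph.refl X ∈ H) (hH2 : ∀ f ∈ H, ∀ g ∈ H, f.trans g ∈ H)
    (hH3 : ∀ f ∈ H, f.symm ∈ H)
    (hnorm : ∀ g ∈ G, ∀ h ∈ H, (g.symm.trans h).trans g ∈ H)
    (hGclosed : closure {q : C(X, X) | ∃ g ∈ G, q = (g : C(X, X))} =
      {q : C(X, X) | ∃ g ∈ G, q = (g : C(X, X))})
    (hHclosed : closure {q : C(X, X) | ∃ h ∈ H, q = (h : C(X, X))} ∩
        {q : C(X, X) | ∃ g ∈ G, q = (g : C(X, X))} ⊆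
      {q : C(X, X) | ∃ h ∈ H, q = (h : C(X, X))}) :
    let coset : (X ≃ₜ X) → Set C(X, X) :=
      fun g => {q : C(X, X) | ∃ h ∈ H, q = ((g : C(X, X))).comp (h : C(X, X))}
    let D' : (X ≃ₜ X) → (X ≃ₜ X) → ENNReal := fun g₁ g₂ =>
      hausdorffEdist (coset g₁) (coset g₂) +
        hausdorffEdist (coset g₁.symm) (coset g₂.symm)
    -- `D'` is a metric on the set of cosets `gH`, `g ∈ G`:
    (∀ g₁ ∈ G, ∀ g₂ ∈ G, (D' g₁ g₂ = 0 ↔ ∃ h ∈ H, g₂ = h.trans g₁)) ∧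
    (∀ g₁ ∈ G, ∀ g₂ ∈ G, D' g₁ g₂ = D' g₂ g₁) ∧
    (∀ g₁ ∈ G, ∀ g₂ ∈ G, ∀ g₃ ∈ G, D' g₁ g₃ ≤ D' g₁ g₂ + D' g₂ g₃) ∧
    (∀ g₁ ∈ G, ∀ g₂ ∈ G, D' g₁ g₂ ≠ ⊤) ∧
    -- `D'` is complete on `G/H`
    (∀ F : ℕ → (X ≃ₜ X), (∀ n, F n ∈ G) →
      (∀ ε : ℝ, 0 < ε → ∃ N : ℕ, ∀ a ≥ N, ∀ b ≥ N,
        D' (F a) (F b) < ENNReal.ofReal ε) →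
      ∃ g ∈ G, Filter.Tendsto (fun n => D' (F n) g) Filter.atTop (nhds 0)) :=
  stmt13_general G H hG2 hG3 hHG hH1 hH2 hH3 hnorm hGclosed hHclosed
end
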